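/- arXiv:1604.07643 — 2 statements merged into one kernel-verified Lean document; each statement's English description precedes it below -/
import Mathlib

section
/- Define φ_q(τ) = ∫₀^τ ξ^(q-1) / log((1+2ξ)/ξ) dξ for τ ≥ 0 and q > 1 (the integrand extended by 0 at ξ = 0). Then for all τ > 0, (q-1)·φ_q'(τ) ≤ τ·φ_q''(τ) ≤ (q + (log 2)⁻¹ - 1)·φ_q'(τ). -/
/-!
For τ > 0 the derivative φ_q' is the integrand f(τ) = τ^(q-1) / L(τ), where L(τ) = log((1+2τ)/τ)
satisfies L'(τ) = -1/(τ(1+2τ)). Hence τ f'(τ) = f(τ) · ((q-1) + 1/((1+2τ) L(τ))), and both bounds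
follow from f > 0 and 0 < 1/((1+2τ) L(τ)) ≤ 1/log 2, as L(τ) ≥ log 2 and 1 + 2τ ≥ 1.
-/

open intervalIntegral Real Set MeasureTheory

noncomputable def phiIntegrand (q t : ℝ) : ℝ := t ^ (q - 1) / log ((1 + 2 * t) / t)

lemma log_two_le_log_one_add_two_mul_div {t : ℝ} (ht : 0 < t) :
    log 2 ≤ log ((1 + 2 * t) / t) :=
  log_le_log two_pos <| by rw [le_div_iff₀ ht]; linarith

lemma log_one_add_two_mul_div_pos {t : ℝ} (ht : 0 < t) : 0 < log ((1 + 2 * t) / t) :=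
  (log_pos one_lt_two).trans_le (log_two_le_log_one_add_two_mul_div ht)

lemma inv_one_add_two_mul_mul_log_le {t : ℝ} (ht : 0 < t) :
    ((1 + 2 * t) * log ((1 + 2 * t) / t))⁻¹ ≤ (log 2)⁻¹ := by
  refine inv_anti₀ (log_pos one_lt_two) ?_
  calc log 2 = 1 * log 2 := (one_mul _).symm
    _ ≤ (1 + 2 * t) * log ((1 + 2 * t) / t) :=
      mul_le_mul (by linarith) (log_two_le_log_one_add_two_mul_div ht) (log_pos one_lt_two).le
        (by linarith)

lemma hasDerivAt_log_one_add_two_mul_div {t : ℝ} (ht : 0 < t) :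
    HasDerivAt (fun s => log ((1 + 2 * s) / s)) (-(t * (1 + 2 * t))⁻¹) t := by
  have hlin : HasDerivAt (fun s : ℝ => 1 + 2 * s) 2 t := by
    simpa using ((hasDerivAt_id t).const_mul 2).const_add 1
  have hquot : HasDerivAt (fun s : ℝ => (1 + 2 * s) / s) ((2 * t - (1 + 2 * t)) / t ^ 2) t := by
    simpa using hlin.fun_div (hasDerivAt_id' t) ht.ne'
  convert hquot.log (by positivity) using 1
  field_simp
  ring

lemma hasDerivAt_phiIntegrand (q : ℝ) {t : ℝ} (ht : 0 < t) :
    HasDerivAt (phiIntegrand q)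
      (phiIntegrand q t / t * (q - 1 + ((1 + 2 * t) * log ((1 + 2 * t) / t))⁻¹)) t := by
  have hL := log_one_add_two_mul_div_pos ht
  refine ((hasDerivAt_rpow_const (p := q - 1) (Or.inl ht.ne')).fun_div
    (hasDerivAt_log_one_add_two_mul_div ht) hL.ne').congr_deriv ?_
  rw [show phiIntegrand q t = t ^ (q - 1) / log ((1 + 2 * t) / t) from rfl,
    show q - 1 - 1 = (q - 1) - 1 by ring, rpow_sub ht, rpow_one]
  generalize log ((1 + 2 * t) / t) = L at hL ⊢
  have : 0 < 1 + 2 * t := by linarith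
  field_simp
  ring

lemma measurable_phiIntegrand (q : ℝ) : Measurable (phiIntegrand q) := by
  unfold phiIntegrand
  fun_prop

lemma intervalIntegrable_phiIntegrand {q t : ℝ} (hq : 0 < q) (ht : 0 ≤ t) :
    IntervalIntegrable (phiIntegrand q) volume 0 t := by
  refine ((intervalIntegrable_rpow' (r := q - 1) (by linarith)).const_mul (log 2)⁻¹).mono_fun'
    (measurable_phiIntegrand q).aestronglyMeasurable ?_
  rw [uIoc_of_le ht]
  filter_upwards [ae_restrict_mem measurableSet_Ioc] with x hx
  have hL := log_one_add_two_mul_div_pos hx.1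
  rw [phiIntegrand, norm_of_nonneg (div_nonneg (rpow_nonneg hx.1.le _) hL.le), div_eq_inv_mul]
  exact mul_le_mul_of_nonneg_right (inv_anti₀ (log_pos one_lt_two)
    (log_two_le_log_one_add_two_mul_div hx.1)) (rpow_nonneg hx.1.le _)

lemma hasDerivAt_integral_phiIntegrand {q t : ℝ} (hq : 0 < q) (ht : 0 < t) :
    HasDerivAt (fun τ => ∫ ξ in 0..τ, phiIntegrand q ξ) (phiIntegrand q t) t :=
  integral_hasDerivAt_right (intervalIntegrable_phiIntegrand hq ht.le)
    (measurable_phiIntegrand q).stronglyMeasurable.stronglyMeasurableAtFilter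
    (hasDerivAt_phiIntegrand q ht).continuousAt

lemma deriv_deriv_integral_phiIntegrand {q t : ℝ} (hq : 0 < q) (ht : 0 < t) :
    deriv (deriv fun τ => ∫ ξ in 0..τ, phiIntegrand q ξ) t = deriv (phiIntegrand q) t := by
  refine Filter.EventuallyEq.deriv_eq ?_
  filter_upwards [Ioi_mem_nhds ht] with s hs
  exact (hasDerivAt_integral_phiIntegrand hq hs).deriv

theorem phi_q_derivative_bounds (q : ℝ) (hq : 1 < q)
    (φq : ℝ → ℝ)
    (hφq : φq = fun τ : ℝ => ∫ ξ in (0:ℝ)..τ, ξ^(q-1) / Real.log ((1 + 2*ξ)/ξ)) :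
    ∀ τ : ℝ, 0 < τ →
      (q - 1) * deriv φq τ ≤ τ * deriv (deriv φq) τ ∧
      τ * deriv (deriv φq) τ ≤ (q + (Real.log 2)⁻¹ - 1) * deriv φq τ := by
  intro τ hτ
  have hq0 : 0 < q := by linarith
  change φq = fun τ => ∫ ξ in 0..τ, phiIntegrand q ξ at hφq
  set c := ((1 + 2 * τ) * log ((1 + 2 * τ) / τ))⁻¹
  have hc_pos : 0 < c := inv_pos.2 (mul_pos (by linarith) (log_one_add_two_mul_div_pos hτ))
  have hf_pos : 0 < phiIntegrand q τ :=
    div_pos (rpow_pos_of_pos hτ _) (log_one_add_two_mul_div_pos hτ)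
  have hd1 : deriv φq τ = phiIntegrand q τ := hφq ▸ (hasDerivAt_integral_phiIntegrand hq0 hτ).deriv
  have hd2 : τ * deriv (deriv φq) τ = phiIntegrand q τ * (q - 1 + c) := by
    rw [hφq, deriv_deriv_integral_phiIntegrand hq0 hτ, (hasDerivAt_phiIntegrand q hτ).deriv,
      ← mul_assoc, mul_div_cancel₀ _ hτ.ne']
  rw [hd1, hd2]
  exact ⟨by nlinarith, by nlinarith [inv_one_add_two_mul_mul_log_le hτ]⟩
end

section
/- Let Q : ℝ³ → ℝ and v : ℝ³ → ℝ³ be smooth with div v = 0, suppose Q(x) → 0 as |x| → ∞, and suppose Q satisfies ΔQ − v·∇Q = |ω|² for a smooth vector field ω. Then Q(x) ≤ 0 for all x ∈ ℝ³, and moreover either Q ≡ 0 on ℝ³ or Q(x) < 0 for every x ∈ ℝ³. -/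
open MeasureTheory

/-- Laplacian of a scalar function on ℝ³ via iterated directional derivatives. -/
noncomputable def lap3 (Q : EuclideanSpace ℝ (Fin 3) → ℝ) (x : EuclideanSpace ℝ (Fin 3)) : ℝ :=
  ∑ i : Fin 3,
    fderiv ℝ (fun y => fderiv ℝ Q y (EuclideanSpace.single i 1)) x (EuclideanSpace.single i 1)

/-- Divergence of a vector field on ℝ³. -/
noncomputable def div3 (v : EuclideanSpace ℝ (Fin 3) → EuclideanSpace ℝ (Fin 3))
    (x : EuclideanSpace ℝ (Fin 3)) : ℝ :=
  ∑ i : Fin 3, fderiv ℝ v x (EuclideanSpace.single i 1) i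

open Filter Metric

abbrev E3 := EuclideanSpace ℝ (Fin 3)

noncomputable abbrev sgl (i : Fin 3) : E3 := EuclideanSpace.single i (1:ℝ)

lemma sgl_apply (i j : Fin 3) : sgl i j = if j = i then (1:ℝ) else 0 :=
  EuclideanSpace.single_apply i 1 j

lemma sum_sgl_sq_coord (k : Fin 3) : ∑ i : Fin 3, (sgl i k)^2 = 1 := by
  fin_cases k <;> simp [Fin.sum_univ_three, sgl_apply]

lemma sum_sgl_sq (i : Fin 3) : ∑ j : Fin 3, (sgl i j)^2 = 1 := by
  fin_cases i <;> simp [Fin.sum_univ_three, sgl_apply]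

lemma sum_mul_eq_inner (a b : E3) : ∑ j, a j * b j = (inner ℝ a b : ℝ) := by
  rw [PiLp.inner_apply]
  simp [RCLike.inner_apply, mul_comm]

lemma sum_sq_eq_norm_sq (a : E3) : ∑ j, (a j)^2 = ‖a‖^2 := by
  rw [EuclideanSpace.norm_eq, Real.sq_sqrt (by positivity)]
  simp [Real.norm_eq_abs, sq_abs]

lemma abs_coord_le (a : E3) (i : Fin 3) : |a i| ≤ ‖a‖ := by
  have h1 : (a i)^2 ≤ ∑ j, (a j)^2 :=
    Finset.single_le_sum (f := fun j => (a j)^2) (fun j _ => sq_nonneg _) (Finset.mem_univ i)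
  rw [sum_sq_eq_norm_sq] at h1
  have h2 := Real.sqrt_le_sqrt h1
  rwa [Real.sqrt_sq_eq_abs, Real.sqrt_sq (norm_nonneg a)] at h2

section SD

lemma second_deriv_nonpos {g g' : ℝ → ℝ} {a : ℝ}
    (hg : ∀ t, HasDerivAt g (g' t) t) (hg' : HasDerivAt g' a 0)
    (hmax : IsLocalMax g 0) : a ≤ 0 := by
  by_contra hc
  push_neg at hc
  have h0 : g' 0 = 0 := by
    have := hmax.deriv_eq_zero
    rwa [(hg 0).deriv] at this
  have hslope : Tendsto (slope g' 0) (nhdsWithin 0 {(0:ℝ)}ᶜ) (nhds a) :=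
    hasDerivAt_iff_tendsto_slope.1 hg'
  have hev : ∀ᶠ t in nhdsWithin 0 {(0:ℝ)}ᶜ, 0 < slope g' 0 t :=
    hslope.eventually (eventually_gt_nhds hc)
  rw [eventually_iff, Metric.mem_nhdsWithin_iff] at hev
  obtain ⟨ε, hε, hball⟩ := hev
  obtain ⟨δ, hδ, hloc⟩ := Metric.eventually_nhds_iff.1 hmax
  set t0 : ℝ := min (ε/2) (δ/2) with ht0
  have ht0pos : 0 < t0 := lt_min (by linarith) (by linarith)
  have hpos : ∀ t ∈ Set.Ioo (0:ℝ) t0, 0 < deriv g t := by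
    intro t ht
    have htmem : t ∈ Metric.ball (0:ℝ) ε ∩ {(0:ℝ)}ᶜ := by
      constructor
      · rw [Metric.mem_ball, Real.dist_eq, sub_zero, abs_of_pos ht.1]
        calc t < t0 := ht.2
        _ ≤ ε/2 := min_le_left _ _
        _ < ε := by linarith
      · exact fun h => absurd h (ne_of_gt ht.1)
    have := hball htmem
    rw [Set.mem_setOf_eq, slope_def_field, h0, sub_zero, sub_zero] at this
    have := mul_pos this ht.1
    rw [div_mul_cancel₀ _ (ne_of_gt ht.1)] at this
    rwa [(hg t).deriv]
  have hsm : StrictMonoOn g (Set.Icc 0 t0) := by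
    apply strictMonoOn_of_deriv_pos (convex_Icc _ _)
    · exact fun t _ => ((hg t).differentiableAt.continuousAt).continuousWithinAt
    · intro t ht
      rw [interior_Icc] at ht
      exact hpos t ht
  have hlt : g 0 < g t0 := hsm (Set.left_mem_Icc.2 ht0pos.le)
    (Set.right_mem_Icc.2 ht0pos.le) ht0pos
  have : g t0 ≤ g 0 := by
    apply hloc
    rw [Real.dist_eq, sub_zero, abs_of_pos ht0pos]
    calc t0 ≤ δ/2 := min_le_right _ _
    _ < δ := by linarith
  linarith

lemma deriv_nonpos_of_right {g : ℝ → ℝ} {a b : ℝ} (hb : 0 < b)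
    (hd : HasDerivAt g a 0) (hle : ∀ t ∈ Set.Ioc (0:ℝ) b, g t ≤ g 0) : a ≤ 0 := by
  have hs : Tendsto (slope g 0) (nhdsWithin 0 (Set.Ioi 0)) (nhds a) :=
    (hasDerivAt_iff_tendsto_slope.1 hd).mono_left
      (nhdsWithin_mono 0 (fun t ht => ne_of_gt ht))
  refine le_of_tendsto hs ?_
  filter_upwards [Ioc_mem_nhdsGT_of_mem (Set.left_mem_Ico.2 hb)] with t ht
  rw [slope_def_field]
  apply div_nonpos_of_nonpos_of_nonneg
  · simp only [sub_nonpos]; exact hle t ht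
  · simp [le_of_lt ht.1]

end SD


lemma lap3_eq {f : E3 → ℝ} {f' : E3 → E3 →L[ℝ] ℝ} {f'' : Fin 3 → E3 → E3 →L[ℝ] ℝ}
    (h1 : ∀ x, HasFDerivAt f (f' x) x)
    (h2 : ∀ i x, HasFDerivAt (fun y => f' y (sgl i)) (f'' i x) x)
    (x : E3) : lap3 f x = ∑ i, f'' i x (sgl i) := by
  unfold lap3
  refine Finset.sum_congr rfl fun i _ => ?_
  have he : (fun y => fderiv ℝ f y (EuclideanSpace.single i 1)) = fun y => f' y (sgl i) := by
    funext y; rw [(h1 y).fderiv]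
  rw [he, (h2 i x).fderiv]

lemma line_hasDerivAt (x u : E3) (t : ℝ) :
    HasDerivAt (fun s : ℝ => x + s • u) u t := by
  simpa using ((hasDerivAt_id t).smul_const u).const_add x

lemma localmax_second {f : E3 → ℝ} {f' : E3 → E3 →L[ℝ] ℝ} {f'' : Fin 3 → E3 → E3 →L[ℝ] ℝ}
    (h1 : ∀ x, HasFDerivAt f (f' x) x)
    (h2 : ∀ i x, HasFDerivAt (fun y => f' y (sgl i)) (f'' i x) x)
    {x : E3} (hmax : IsLocalMax f x) :
    f' x = 0 ∧ ∀ i, f'' i x (sgl i) ≤ 0 := by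
  constructor
  · rw [← (h1 x).fderiv]; exact hmax.fderiv_eq_zero
  · intro i
    set u := sgl i
    have hline : ∀ t : ℝ, HasDerivAt (fun s : ℝ => x + s • u) u t := line_hasDerivAt x u
    have hg : ∀ t : ℝ, HasDerivAt (fun s : ℝ => f (x + s • u)) (f' (x + t • u) u) t := by
      intro t
      exact HasFDerivAt.comp_hasDerivAt t (h1 (x + t • u)) (hline t)
    have hg' : HasDerivAt (fun t : ℝ => f' (x + t • u) u) (f'' i x u) 0 := by
      have := HasFDerivAt.comp_hasDerivAt 0 (by simpa using h2 i x) (hline 0)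
      exact this
    have hm : IsLocalMax (fun s : ℝ => f (x + s • u)) 0 := by
      have hx0 : x + (0:ℝ) • u = x := by simp
      have hcont : Continuous (fun s : ℝ => x + s • u) := by continuity
      have htd : Filter.Tendsto (fun s : ℝ => x + s • u) (nhds 0) (nhds x) := by
        have := hcont.continuousAt (x := (0:ℝ))
        rwa [ContinuousAt, hx0] at this
      exact IsMaxFilter.comp_tendsto (g := fun s : ℝ => x + s • u) (b := (0:ℝ))
        (by have h : IsMaxFilter f (nhds x) x := hmax; simpa [hx0] using h) htd
    exact second_deriv_nonpos hg hg' hm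


lemma add_smul_data1 {Q g : E3 → ℝ} {Q' g' : E3 → E3 →L[ℝ] ℝ}
    (hQ1 : ∀ x, HasFDerivAt Q (Q' x) x) (hg1 : ∀ x, HasFDerivAt g (g' x) x) (ε : ℝ) :
    ∀ x, HasFDerivAt (fun y => Q y + ε * g y) (Q' x + ε • g' x) x :=
  fun x => (hQ1 x).add ((hg1 x).const_mul ε)

lemma add_smul_data2 {Q' g' : E3 → E3 →L[ℝ] ℝ} {Q'' g'' : Fin 3 → E3 → E3 →L[ℝ] ℝ}
    (hQ2 : ∀ i x, HasFDerivAt (fun y => Q' y (sgl i)) (Q'' i x) x)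
    (hg2 : ∀ i x, HasFDerivAt (fun y => g' y (sgl i)) (g'' i x) x) (ε : ℝ) :
    ∀ i x, HasFDerivAt (fun y => (Q' y + ε • g' y) (sgl i)) (Q'' i x + ε • g'' i x) x := by
  intro i x
  have he : (fun y => (Q' y + ε • g' y) (sgl i))
      = fun y => Q' y (sgl i) + ε * (g' y (sgl i)) := by
    funext y; simp
  rw [he]
  exact (hQ2 i x).add ((hg2 i x).const_mul ε)

lemma exp_data1 {φ : E3 → ℝ} {φ' : E3 → E3 →L[ℝ] ℝ}
    (h1 : ∀ x, HasFDerivAt φ (φ' x) x) :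
    ∀ x, HasFDerivAt (fun y => Real.exp (φ y)) (Real.exp (φ x) • φ' x) x :=
  fun x => (Real.hasDerivAt_exp (φ x)).comp_hasFDerivAt x (h1 x)

lemma exp_data2 {φ : E3 → ℝ} {φ' : E3 → E3 →L[ℝ] ℝ} {φ'' : Fin 3 → E3 → E3 →L[ℝ] ℝ}
    (h1 : ∀ x, HasFDerivAt φ (φ' x) x)
    (h2 : ∀ i x, HasFDerivAt (fun y => φ' y (sgl i)) (φ'' i x) x) :
    ∀ (i : Fin 3) (x : E3),
      HasFDerivAt (fun y => (Real.exp (φ y) • φ' y) (sgl i))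
        (Real.exp (φ x) • φ'' i x + (φ' x (sgl i)) • (Real.exp (φ x) • φ' x)) x := by
  intro i x
  have he : (fun y => (Real.exp (φ y) • φ' y) (sgl i))
      = fun y => Real.exp (φ y) * (φ' y (sgl i)) := by
    funext y; simp
  rw [he]
  exact (exp_data1 h1 x).mul (h2 i x)

section BarrierA

variable (l : ℝ)

noncomputable def phiA : E3 → ℝ := fun x => l * x 0
noncomputable def phiA' : E3 →L[ℝ] ℝ := l • (EuclideanSpace.proj (0 : Fin 3))

lemma phiA_hasFDeriv : ∀ x, HasFDerivAt (phiA l) (phiA' l) x := by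
  intro x
  exact HasFDerivAt.const_mul ((EuclideanSpace.proj (0 : Fin 3) : E3 →L[ℝ] ℝ).hasFDerivAt (x := x)) l

lemma phiA'_apply (u : E3) : phiA' l u = l * u 0 := by
  simp [phiA']

lemma phiA_hasFDeriv2 : ∀ (i : Fin 3) (x : E3),
    HasFDerivAt (fun _ : E3 => phiA' l (sgl i)) (0 : E3 →L[ℝ] ℝ) x := by
  intro i x
  exact hasFDerivAt_const _ _

end BarrierA

section BarrierB

variable (α : ℝ) (z : E3)

noncomputable def phiB : E3 → ℝ := fun x => -α * ∑ j : Fin 3, (x j - z j)^2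

noncomputable def phiB' : E3 → E3 →L[ℝ] ℝ := fun x =>
  (-α) • ∑ j : Fin 3, (2 * (x j - z j)) • (EuclideanSpace.proj j : E3 →L[ℝ] ℝ)

noncomputable def phiB'' : Fin 3 → E3 →L[ℝ] ℝ := fun i =>
  (-α) • ∑ j : Fin 3, (sgl i j) • ((2:ℝ) • (EuclideanSpace.proj j : E3 →L[ℝ] ℝ))

lemma proj_sub_hasFDeriv (j : Fin 3) (x : E3) :
    HasFDerivAt (fun y : E3 => y j - z j) (EuclideanSpace.proj j : E3 →L[ℝ] ℝ) x :=
  ((EuclideanSpace.proj j : E3 →L[ℝ] ℝ).hasFDerivAt (x := x)).sub_const (z j)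

lemma sq_coord_hasFDeriv (j : Fin 3) (x : E3) :
    HasFDerivAt (fun y : E3 => (y j - z j)^2)
      ((2 * (x j - z j)) • (EuclideanSpace.proj j : E3 →L[ℝ] ℝ)) x := by
  have h := (proj_sub_hasFDeriv z j x).mul (proj_sub_hasFDeriv z j x)
  have he : (fun y : E3 => (y j - z j)^2) = fun y : E3 => (y j - z j) * (y j - z j) := by
    funext y; ring
  rw [he]
  have e : (2 * (x j - z j)) • (EuclideanSpace.proj j : E3 →L[ℝ] ℝ)
      = (x j - z j) • (EuclideanSpace.proj j : E3 →L[ℝ] ℝ)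
        + (x j - z j) • (EuclideanSpace.proj j : E3 →L[ℝ] ℝ) := by
    rw [two_mul, add_smul]
  rw [e]
  exact h

lemma phiB_hasFDeriv : ∀ x, HasFDerivAt (phiB α z) (phiB' α z x) x := by
  intro x
  exact (HasFDerivAt.fun_sum (fun j _ => sq_coord_hasFDeriv z j x)).const_mul (-α)

lemma phiB_hasFDeriv2 : ∀ (i : Fin 3) (x : E3),
    HasFDerivAt (fun y => phiB' α z y (sgl i)) (phiB'' α i) x := by
  intro i x
  have he : (fun y => phiB' α z y (sgl i))
      = fun y => -α * ∑ j : Fin 3, (2 * (y j - z j)) * (sgl i j) := by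
    funext y; simp [phiB']
  rw [he]
  exact (HasFDerivAt.fun_sum (fun j _ =>
    ((proj_sub_hasFDeriv z j x).const_mul 2).mul_const (sgl i j))).const_mul (-α)

lemma phiB'_apply (x u : E3) : phiB' α z x u = -(2*α) * (inner ℝ (x - z) u : ℝ) := by
  simp only [phiB', ContinuousLinearMap.smul_apply, ContinuousLinearMap.sum_apply,
    ContinuousLinearMap.coe_smul', Pi.smul_apply, smul_eq_mul]
  rw [← sum_mul_eq_inner, Finset.mul_sum, Finset.mul_sum]
  refine Finset.sum_congr rfl fun j _ => ?_
  have : (EuclideanSpace.proj j : E3 →L[ℝ] ℝ) u = u j := rfl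
  rw [this, PiLp.sub_apply]
  ring

lemma phiB'_single (x : E3) (i : Fin 3) : phiB' α z x (sgl i) = -(2*α) * (x i - z i) := by
  rw [phiB'_apply]
  have : (inner ℝ (x - z) (sgl i) : ℝ) = (x - z) i := by
    rw [← sum_mul_eq_inner]
    simp [sgl_apply, Finset.sum_ite_eq']
  rw [this, PiLp.sub_apply]

lemma phiB''_single (i : Fin 3) : phiB'' α i (sgl i) = -(2*α) := by
  have hp : ∀ j : Fin 3, (EuclideanSpace.proj j : E3 →L[ℝ] ℝ) (sgl i) = sgl i j :=
    fun j => rfl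
  simp only [phiB'', ContinuousLinearMap.smul_apply, ContinuousLinearMap.sum_apply,
    ContinuousLinearMap.coe_smul', Pi.smul_apply, smul_eq_mul, hp]
  have h2 : ∑ j : Fin 3, sgl i j * (2 * sgl i j) = 2 * ∑ j : Fin 3, (sgl i j)^2 := by
    rw [Finset.mul_sum]; exact Finset.sum_congr rfl fun j _ => by ring
  rw [h2, sum_sgl_sq]
  ring

lemma phiB_val (x : E3) : phiB α z x = -α * ‖x - z‖^2 := by
  unfold phiB
  congr 1
  rw [← sum_sq_eq_norm_sq]
  exact Finset.sum_congr rfl fun j _ => by rw [PiLp.sub_apply]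

end BarrierB
lemma combined_localmax {Q g : E3 → ℝ} {Q' g' : E3 → E3 →L[ℝ] ℝ}
    {Q'' g'' : Fin 3 → E3 → E3 →L[ℝ] ℝ}
    (hQ1 : ∀ x, HasFDerivAt Q (Q' x) x) (hg1 : ∀ x, HasFDerivAt g (g' x) x)
    (hQ2 : ∀ i x, HasFDerivAt (fun y => Q' y (sgl i)) (Q'' i x) x)
    (hg2 : ∀ i x, HasFDerivAt (fun y => g' y (sgl i)) (g'' i x) x)
    {ε : ℝ} {x : E3} (hlm : IsLocalMax (fun y => Q y + ε * g y) x) :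
    Q' x + ε • g' x = 0 ∧
      (∑ i, Q'' i x (sgl i)) + ε * (∑ i, g'' i x (sgl i)) ≤ 0 := by
  obtain ⟨h0, h2⟩ := localmax_second (add_smul_data1 hQ1 hg1 ε) (add_smul_data2 hQ2 hg2 ε) hlm
  refine ⟨h0, ?_⟩
  have hsum := Finset.sum_nonpos (fun i (_ : i ∈ Finset.univ) => h2 i)
  simpa [ContinuousLinearMap.add_apply, ContinuousLinearMap.smul_apply, smul_eq_mul,
    Finset.sum_add_distrib, Finset.mul_sum] using hsum

lemma barrierA_sum (l : ℝ) (x : E3) :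
    ∑ i : Fin 3, (Real.exp (phiA l x) • (0 : E3 →L[ℝ] ℝ)
        + (phiA' l (sgl i)) • (Real.exp (phiA l x) • phiA' l)) (sgl i)
      = l^2 * Real.exp (phiA l x) := by
  have h : ∀ i : Fin 3, (Real.exp (phiA l x) • (0 : E3 →L[ℝ] ℝ)
        + (phiA' l (sgl i)) • (Real.exp (phiA l x) • phiA' l)) (sgl i)
      = (l^2 * Real.exp (phiA l x)) * (sgl i 0)^2 := by
    intro i
    simp only [ContinuousLinearMap.add_apply, ContinuousLinearMap.smul_apply,
      ContinuousLinearMap.zero_apply, smul_eq_mul, phiA'_apply]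
    ring
  rw [Finset.sum_congr rfl (fun i _ => h i), ← Finset.mul_sum, sum_sgl_sq_coord, mul_one]

lemma barrierB_sum (α : ℝ) (z : E3) (x : E3) :
    ∑ i : Fin 3, (Real.exp (phiB α z x) • phiB'' α i
        + (phiB' α z x (sgl i)) • (Real.exp (phiB α z x) • phiB' α z x)) (sgl i)
      = Real.exp (phiB α z x) * (4*α^2 * ‖x - z‖^2 - 6*α) := by
  have h : ∀ i : Fin 3, (Real.exp (phiB α z x) • phiB'' α i
        + (phiB' α z x (sgl i)) • (Real.exp (phiB α z x) • phiB' α z x)) (sgl i)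
      = Real.exp (phiB α z x) * (-(2*α)) + (4*α^2 * Real.exp (phiB α z x)) * ((x - z) i)^2 := by
    intro i
    simp only [ContinuousLinearMap.add_apply, ContinuousLinearMap.smul_apply, smul_eq_mul,
      phiB'_single, phiB''_single]
    rw [PiLp.sub_apply]
    ring
  rw [Finset.sum_congr rfl (fun i _ => h i), Finset.sum_add_distrib, Finset.sum_const,
    ← Finset.mul_sum]
  have hn : ∑ i : Fin 3, ((x - z) i)^2 = ‖x - z‖^2 := sum_sq_eq_norm_sq (x - z)
  rw [hn]
  simp only [Finset.card_univ, Fintype.card_fin, nsmul_eq_mul]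
  ring

lemma continuous_phiB (α : ℝ) (z : E3) : Continuous (phiB α z) :=
  continuous_const.mul (continuous_finset_sum _ (fun j _ =>
    (((EuclideanSpace.proj j : E3 →L[ℝ] ℝ).continuous.sub continuous_const).pow 2)))

lemma continuous_phiA (l : ℝ) : Continuous (phiA l) :=
  continuous_const.mul (EuclideanSpace.proj (0 : Fin 3) : E3 →L[ℝ] ℝ).continuous

lemma interior_contra {α r C S d e ε ω2 : ℝ}
    (hαpos : 0 < α) (hrpos : 0 < r) (hCnn : 0 ≤ C)
    (hαr : α * r^2 = 7 + 2*r*C) (hSb : -(r*C) ≤ S) (hdr : r/2 ≤ d)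
    (he : 0 < e) (hεpos : 0 < ε) (hω2 : 0 ≤ ω2)
    (hs : ω2 + -(ε * (e * (-(2*α) * S))) + ε * (e * (4*α^2*d^2 - 6*α)) ≤ 0) : False := by
  have hd2 : (r/2)^2 ≤ d^2 := by nlinarith
  nlinarith [mul_le_mul_of_nonneg_left hd2 (by positivity : (0:ℝ) ≤ 4*(ε*e)*α^2),
             mul_le_mul_of_nonneg_left hSb (by positivity : (0:ℝ) ≤ 2*(ε*e)*α),
             mul_pos (mul_pos hεpos he) hαpos, hαr, mul_pos hεpos he]

set_option maxHeartbeats 1000000 in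
theorem head_pressure_sign
    (Q : EuclideanSpace ℝ (Fin 3) → ℝ)
    (v ω : EuclideanSpace ℝ (Fin 3) → EuclideanSpace ℝ (Fin 3))
    (hQ : ContDiff ℝ (⊤ : ℕ∞) Q) (hv : ContDiff ℝ (⊤ : ℕ∞) v) (hω : ContDiff ℝ (⊤ : ℕ∞) ω)
    (hdiv : ∀ x, div3 v x = 0)
    (hdecay : Filter.Tendsto Q (Bornology.cobounded (EuclideanSpace ℝ (Fin 3))) (nhds 0))
    (heq : ∀ x, lap3 Q x - fderiv ℝ Q x (v x) = ‖ω x‖^2) :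
    (∀ x, Q x ≤ 0) ∧ ((∀ x, Q x = 0) ∨ (∀ x, Q x < 0)) := by
  classical
  set Q' : E3 → E3 →L[ℝ] ℝ := fun x => fderiv ℝ Q x with hQ'def
  have hQ1 : ∀ x, HasFDerivAt Q (Q' x) x := fun x => (hQ.differentiable (by simp) x).hasFDerivAt
  have hQcd : ∀ i : Fin 3, ContDiff ℝ (⊤ : ℕ∞) (fun y => Q' y (sgl i)) := by
    intro i
    exact (hQ.fderiv_right (by simp)).clm_apply contDiff_const
  set Q'' : Fin 3 → E3 → E3 →L[ℝ] ℝ :=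
    fun i x => fderiv ℝ (fun y => Q' y (sgl i)) x with hQ''def
  have hQ2 : ∀ i x, HasFDerivAt (fun y => Q' y (sgl i)) (Q'' i x) x :=
    fun i x => ((hQcd i).differentiable (by simp) x).hasFDerivAt
  have hlapQ : ∀ x, lap3 Q x = ∑ i, Q'' i x (sgl i) := lap3_eq hQ1 hQ2
  have hωQ : ∀ x, (∑ i, Q'' i x (sgl i)) - Q' x (v x) = ‖ω x‖^2 := by
    intro x
    rw [← hlapQ x]
    exact heq x
  -- Part A : Q ≤ 0
  have hle : ∀ x, Q x ≤ 0 := by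
    by_contra hc; push_neg at hc
    obtain ⟨x0, hx0⟩ := hc
    set M := Q x0 with hM
    have hM2 : 0 < M/2 := by linarith
    have hball : Q ⁻¹' (Metric.ball (0:ℝ) (M/2)) ∈ Bornology.cobounded (EuclideanSpace ℝ (Fin 3)) :=
      hdecay (Metric.ball_mem_nhds 0 hM2)
    obtain ⟨R0, hR0⟩ :=
      (Bornology.IsCobounded.compl (Bornology.isCobounded_def.2 hball)).subset_closedBall 0
    set R : ℝ := |R0| + 1 with hRdef
    have hQR : ∀ x : E3, R ≤ ‖x‖ → Q x ≤ M/2 := by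
      intro x hx
      have hxn : x ∉ Metric.closedBall (0:E3) R0 := by
        rw [Metric.mem_closedBall, dist_zero_right]
        intro h
        have : R0 ≤ |R0| := le_abs_self R0
        linarith
      have hxs : x ∈ Q ⁻¹' (Metric.ball (0:ℝ) (M/2)) := by
        by_contra hxc
        exact hxn (hR0 hxc)
      have := hxs
      rw [Set.mem_preimage, Metric.mem_ball, Real.dist_eq, sub_zero] at this
      have := abs_lt.1 this
      linarith [this.2]
    have hRpos : 0 < R := by positivity
    have hx0R : ‖x0‖ < R := by
      by_contra hcc
      push_neg at hcc
      have := hQR x0 hcc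
      linarith
    obtain ⟨C0, hC0⟩ := (isCompact_closedBall (0:E3) R).exists_bound_of_continuousOn
      (hv.continuous.norm.continuousOn)
    set C : ℝ := max C0 0 with hCdef
    have hC : ∀ x ∈ Metric.closedBall (0:E3) R, ‖v x‖ ≤ C := by
      intro x hx
      have h := hC0 x hx
      rw [norm_norm] at h
      exact le_trans h (le_max_left _ _)
    have hCnn : 0 ≤ C := le_max_right _ _
    set l : ℝ := C + 1 with hldef
    have hlpos : 0 < l := by linarith
    set g : E3 → ℝ := fun y => Real.exp (phiA l y) with hgdef
    have hg1 : ∀ x, HasFDerivAt g (Real.exp (phiA l x) • phiA' l) x :=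
      exp_data1 (phiA_hasFDeriv l)
    have hg2 := exp_data2 (phiA_hasFDeriv l) (phiA_hasFDeriv2 l)
    set δ : ℝ := M / (4 * Real.exp (l * R)) with hδdef
    have hδpos : 0 < δ := by
      apply div_pos hx0
      positivity
    set w : E3 → ℝ := fun y => Q y + δ * g y with hwdef
    have hwc : Continuous w := hQ.continuous.add
      (continuous_const.mul (Real.continuous_exp.comp (continuous_phiA l)))
    have hx0B : x0 ∈ Metric.closedBall (0:E3) R := by
      rw [Metric.mem_closedBall, dist_zero_right]; exact hx0R.le
    obtain ⟨y, hyB, hymax⟩ := (isCompact_closedBall (0:E3) R).exists_isMaxOn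
      ⟨x0, hx0B⟩ hwc.continuousOn
    have hyR : ‖y‖ ≤ R := by rwa [Metric.mem_closedBall, dist_zero_right] at hyB
    rcases lt_or_eq_of_le hyR with hylt | hyeq
    · -- interior maximum: contradiction with ellipticity
      have hlm : IsLocalMax w y := by
        apply hymax.isLocalMax
        exact Filter.mem_of_superset
          ((Metric.isOpen_ball (x := (0:E3)) (ε := R)).mem_nhds
            (by rwa [Metric.mem_ball, dist_zero_right]))
          Metric.ball_subset_closedBall
      obtain ⟨hz, hs⟩ := combined_localmax hQ1 hg1 hQ2 hg2 hlm
      rw [barrierA_sum l y] at hs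
      have hzv : Q' y (v y) + δ * (Real.exp (phiA l y) * (l * (v y) 0)) = 0 := by
        have := congrArg (fun (L : E3 →L[ℝ] ℝ) => L (v y)) hz
        simpa [ContinuousLinearMap.add_apply, ContinuousLinearMap.smul_apply, smul_eq_mul,
          phiA'_apply] using this
      have hωy := hωQ y
      have hvy : ‖v y‖ ≤ C := hC y (by rw [Metric.mem_closedBall, dist_zero_right]; exact hyR)
      have hvy0 : (v y) 0 ≤ C := le_trans (le_trans (le_abs_self _) (abs_coord_le (v y) 0)) hvy
      have hexp : 0 < Real.exp (phiA l y) := Real.exp_pos _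
      have hω2 : (0:ℝ) ≤ ‖ω y‖^2 := sq_nonneg _
      have e1 : Q' y (v y) = -(δ * (Real.exp (phiA l y) * (l * (v y) 0))) := by linarith
      have e2 : ∑ i, Q'' i y (sgl i) = ‖ω y‖^2 + Q' y (v y) := by linarith
      rw [e2, e1] at hs
      have hδe : 0 < δ * Real.exp (phiA l y) := mul_pos hδpos hexp
      have hlv : 1 ≤ l - (v y) 0 := by rw [hldef]; linarith
      nlinarith [mul_pos hδe hlpos, hlv, hω2]
    · -- boundary maximum: contradiction with decay bound
      have hwx0 : M ≤ w x0 := by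
        have hgpos : 0 < g x0 := Real.exp_pos _
        have he : w x0 = M + δ * g x0 := rfl
        nlinarith [mul_pos hδpos hgpos]
      have hQy : Q y ≤ M/2 := hQR y hyeq.ge
      have hgy : g y ≤ Real.exp (l * R) := by
        apply Real.exp_le_exp.2
        have h0 : (y : E3) 0 ≤ R := le_trans (le_trans (le_abs_self _) (abs_coord_le y 0))
          hyeq.le
        have : phiA l y = l * y 0 := rfl
        rw [this]
        exact mul_le_mul_of_nonneg_left h0 hlpos.le
      have hδe : δ * Real.exp (l * R) = M / 4 := by
        rw [hδdef]
        field_simp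
      have hwy : w y ≤ M/2 + M/4 := by
        have : w y = Q y + δ * g y := rfl
        rw [this]
        have : δ * g y ≤ δ * Real.exp (l * R) := mul_le_mul_of_nonneg_left hgy hδpos.le
        linarith [hδe ▸ this]
      have hwle : w x0 ≤ w y := hymax hx0B
      have hfin : M ≤ M / 2 + M / 4 := le_trans hwx0 (le_trans hwle hwy)
      linarith
  refine ⟨hle, ?_⟩
  by_cases hall : ∀ x, Q x = 0
  · exact Or.inl hall
  · right
    push_neg at hall
    obtain ⟨b0, hb0⟩ := hall
    have hb0' : Q b0 < 0 := lt_of_le_of_ne (hle b0) hb0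
    have hcore : ∀ p0 b : E3, Q p0 = 0 → Q b < 0 → False := by
      intro p0 b hp0 hb
      set Z : Set E3 := {x | Q x = 0} with hZdef
      have hZc : IsClosed Z := isClosed_eq hQ.continuous continuous_const
      have hZne : Z.Nonempty := ⟨p0, hp0⟩
      obtain ⟨p, hpZ, hpd⟩ := hZc.exists_infDist_eq_dist hZne b
      have hQp : Q p = 0 := hpZ
      set r : ℝ := Metric.infDist b Z with hrdef
      have hrd : dist b p = r := hpd.symm
      have hrpos : 0 < r := by
        rcases eq_or_lt_of_le (Metric.infDist_nonneg (s := Z) (x := b)) with h0 | h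
        · exfalso
          have hd0 : dist b p = 0 := by rw [hrd, hrdef, ← h0]
          have hbp : b = p := dist_eq_zero.1 hd0
          rw [hbp, hQp] at hb
          exact lt_irrefl 0 hb
        · exact h
      have hball2 : ∀ x : E3, dist x b < r → Q x < 0 := by
        intro x hx
        rcases lt_or_eq_of_le (hle x) with h | h
        · exact h
        · exfalso
          have hxZ : x ∈ Z := h
          have hinf : r ≤ dist b x := Metric.infDist_le_dist_of_mem hxZ
          rw [dist_comm] at hinf
          linarith
      obtain ⟨C0, hC0⟩ := (isCompact_closedBall b r).exists_bound_of_continuousOn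
        hv.continuous.norm.continuousOn
      set C : ℝ := max C0 0 with hCdef
      have hC : ∀ x ∈ Metric.closedBall b r, ‖v x‖ ≤ C := by
        intro x hx
        have h := hC0 x hx
        rw [norm_norm] at h
        exact le_trans h (le_max_left _ _)
      have hCnn : 0 ≤ C := le_max_right _ _
      set α : ℝ := (7 + 2*r*C) / r^2 with hαdef
      have hαpos : 0 < α := by
        apply div_pos
        · nlinarith
        · positivity
      have hαr : α * r^2 = 7 + 2*r*C := by
        rw [hαdef]
        field_simp
      set g : E3 → ℝ := fun y => Real.exp (phiB α b y) with hgdef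
      have hg1 : ∀ x, HasFDerivAt g (Real.exp (phiB α b x) • phiB' α b x) x :=
        exp_data1 (phiB_hasFDeriv α b)
      have hg2 := exp_data2 (phiB_hasFDeriv α b) (phiB_hasFDeriv2 α b)
      have hgval : ∀ x : E3, g x = Real.exp (-α * ‖x - b‖^2) := by
        intro x
        rw [hgdef]
        simp only []
        rw [phiB_val]
      have hsne : (Metric.sphere b (r/2)).Nonempty := by
        refine ⟨b + (r/2) • sgl 0, ?_⟩
        rw [Metric.mem_sphere, dist_eq_norm, add_sub_cancel_left, norm_smul,
          EuclideanSpace.norm_single]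
        rw [Real.norm_eq_abs, abs_of_pos (by linarith)]
        simp
      obtain ⟨xm, hxm, hxmmax⟩ := (isCompact_sphere b (r/2)).exists_isMaxOn hsne
        hQ.continuous.continuousOn
      set m : ℝ := Q xm with hmdef
      have hm : m < 0 := by
        apply hball2
        rw [Metric.mem_sphere] at hxm
        rw [hxm]
        linarith
      set eIn : ℝ := Real.exp (-α * (r/2)^2) with heIn
      set eOut : ℝ := Real.exp (-α * r^2) with heOut
      have heio : eOut < eIn := by
        apply Real.exp_lt_exp.2
        nlinarith
      have heOpos : 0 < eOut := Real.exp_pos _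
      set ε : ℝ := (-m) / (eIn - eOut) with hεdef
      have hεpos : 0 < ε := div_pos (by linarith) (by linarith)
      have hεe : ε * (eIn - eOut) = -m := by
        rw [hεdef]
        exact div_mul_cancel₀ (-m) (ne_of_gt (by linarith : (0:ℝ) < eIn - eOut))
      set w : E3 → ℝ := fun y => Q y + ε * g y with hwdef
      have hwc : Continuous w := hQ.continuous.add
        (continuous_const.mul (Real.continuous_exp.comp (continuous_phiB α b)))
      set A : Set E3 := Metric.closedBall b r ∩ (Metric.ball b (r/2))ᶜ with hAdef
      have hAc : IsCompact A :=
        (isCompact_closedBall b r).inter_right Metric.isOpen_ball.isClosed_compl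
      have hpA : p ∈ A := by
        constructor
        · exact Metric.mem_closedBall.2 (le_of_eq (by rw [dist_comm]; exact hrd))
        · intro hmem
          rw [Metric.mem_ball, dist_comm, hrd] at hmem
          linarith
      obtain ⟨q, hqA, hqmax⟩ := hAc.exists_isMaxOn ⟨p, hpA⟩ hwc.continuousOn
      have hq1 : r/2 ≤ dist q b := by
        have h := hqA.2
        rw [Set.mem_compl_iff, Metric.mem_ball] at h
        linarith [not_lt.1 h]
      have hq2 : dist q b ≤ r := by
        have h := hqA.1
        rwa [Metric.mem_closedBall] at h
      by_cases hint : r/2 < dist q b ∧ dist q b < r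
      · -- interior maximum point: contradiction with ellipticity
        have hO : IsOpen {x : E3 | r/2 < dist x b ∧ dist x b < r} := by
          have hcont : Continuous fun x : E3 => dist x b := continuous_id.dist continuous_const
          have he : {x : E3 | r/2 < dist x b ∧ dist x b < r}
              = (fun x : E3 => dist x b) ⁻¹' (Set.Ioo (r/2) r) := rfl
          rw [he]
          exact isOpen_Ioo.preimage hcont
        have hsub : {x : E3 | r/2 < dist x b ∧ dist x b < r} ⊆ A := by
          intro x hx
          exact ⟨by rw [Metric.mem_closedBall]; exact hx.2.le,
            by intro hmem; rw [Metric.mem_ball] at hmem; linarith [hx.1]⟩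
        have hlm : IsLocalMax w q :=
          hqmax.isLocalMax (Filter.mem_of_superset (hO.mem_nhds hint) hsub)
        obtain ⟨hz0, hs⟩ := combined_localmax hQ1 hg1 hQ2 hg2 hlm
        rw [barrierB_sum α b q] at hs
        have hzv : Q' q (v q)
            + ε * (Real.exp (phiB α b q) * (-(2*α) * (inner ℝ (q - b) (v q) : ℝ))) = 0 := by
          have h := congrArg (fun (L : E3 →L[ℝ] ℝ) => L (v q)) hz0
          simpa [ContinuousLinearMap.add_apply, ContinuousLinearMap.smul_apply, smul_eq_mul,
            phiB'_apply] using h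
        have hωq := hωQ q
        set S : ℝ := (inner ℝ (q - b) (v q) : ℝ) with hSdef
        have hd : ‖q - b‖ = dist q b := (dist_eq_norm q b).symm
        have hSb : -(r * C) ≤ S := by
          have habs : |S| ≤ ‖q - b‖ * ‖v q‖ := abs_real_inner_le_norm _ _
          have h1 : ‖q - b‖ * ‖v q‖ ≤ r * C := by
            apply mul_le_mul
            · rw [hd]; exact hq2
            · exact hC q (by rw [Metric.mem_closedBall]; exact hq2)
            · exact norm_nonneg _
            · exact hrpos.le
          have := neg_abs_le S
          linarith
        have hexp : 0 < Real.exp (phiB α b q) := Real.exp_pos _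
        have e1 : Q' q (v q) = -(ε * (Real.exp (phiB α b q) * (-(2*α) * S))) := by linarith
        have e2 : ∑ i, Q'' i q (sgl i) = ‖ω q‖^2 + Q' q (v q) := by linarith
        rw [e2, e1] at hs
        have hdr : r/2 ≤ ‖q - b‖ := by rw [hd]; exact hq1
        exact interior_contra hαpos hrpos hCnn hαr hSb hdr hexp hεpos (sq_nonneg _) hs
      · -- maximum on the boundary spheres
        have hqbd : dist q b = r/2 ∨ dist q b = r := by
          push_neg at hint
          rcases eq_or_lt_of_le hq1 with h | h
          · exact Or.inl h.symm
          · exact Or.inr (le_antisymm hq2 (hint h))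
        have hwq : w q ≤ ε * eOut := by
          rcases hqbd with h | h
          · have hQq : Q q ≤ m := hxmmax (by rw [Metric.mem_sphere]; exact h)
            have hgq : g q = eIn := by
              rw [hgval q, ← dist_eq_norm, h]
            have hwqe : w q = Q q + ε * g q := rfl
            rw [hwqe, hgq]
            linarith
          · have hgq : g q = eOut := by
              rw [hgval q, ← dist_eq_norm, h]
            have hwqe : w q = Q q + ε * g q := rfl
            rw [hwqe, hgq]
            have := hle q
            linarith
        have hwA : ∀ x ∈ A, w x ≤ ε * eOut := fun x hx => le_trans (hqmax hx) hwq
        -- Hopf boundary point argument at p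
        set u : E3 := r⁻¹ • (b - p) with hudef
        have hp0e : p + (0:ℝ) • u = p := by simp
        have hw1 := add_smul_data1 hQ1 hg1 ε
        have hgd : HasDerivAt (fun t : ℝ => w (p + t • u))
            ((Q' p + ε • (Real.exp (phiB α b p) • phiB' α b p)) u) 0 := by
          have hwp := hw1 (p + (0:ℝ) • u)
          have h := HasFDerivAt.comp_hasDerivAt (0:ℝ) hwp (line_hasDerivAt p u 0)
          rw [hp0e] at h
          exact h
        have hnb : ‖p - b‖ = r := by
          rw [← dist_eq_norm, dist_comm, hrd]
        have hwp_eq : w p = ε * eOut := by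
          have hgp : g p = eOut := by rw [hgval p, hnb]
          have hwpe : w p = Q p + ε * g p := rfl
          rw [hwpe, hgp, hQp]
          ring
        have hline_mem : ∀ t ∈ Set.Ioc (0:ℝ) (r/2), p + t • u ∈ A := by
          intro t ht
          have hvec : p + t • u - b = (1 - t * r⁻¹) • (p - b) := by
            rw [hudef]
            rw [smul_smul, smul_sub, sub_smul, one_smul]
            module
          have htr : 0 ≤ 1 - t * r⁻¹ := by
            rw [sub_nonneg]
            rw [mul_inv_le_iff₀ hrpos]
            linarith [ht.2]
          have hnorm : dist (p + t • u) b = r - t := by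
            rw [dist_eq_norm, hvec, norm_smul, Real.norm_eq_abs, abs_of_nonneg htr, hnb]
            field_simp
          constructor
          · rw [Metric.mem_closedBall, hnorm]
            linarith [ht.1]
          · intro hmem
            rw [Metric.mem_ball, hnorm] at hmem
            linarith [ht.2]
        have hder : (Q' p + ε • (Real.exp (phiB α b p) • phiB' α b p)) u ≤ 0 := by
          apply deriv_nonpos_of_right (by linarith : (0:ℝ) < r/2) hgd
          intro t ht
          have h1 : w (p + t • u) ≤ ε * eOut := hwA _ (hline_mem t ht)
          show w (p + t • u) ≤ w (p + (0:ℝ) • u)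
          rw [hp0e, hwp_eq]
          exact h1
        have hQ'p : Q' p = 0 := by
          have hlmp : IsLocalMax Q p :=
            Filter.Eventually.of_forall (fun x => by rw [hQp]; exact hle x)
          exact hlmp.fderiv_eq_zero
        have hip : (inner ℝ (p - b) u : ℝ) = -r := by
          rw [hudef, real_inner_smul_right]
          have hbp : b - p = -(p - b) := by abel
          rw [hbp, inner_neg_right, real_inner_self_eq_norm_sq, hnb]
          field_simp
        have hval : (Q' p + ε • (Real.exp (phiB α b p) • phiB' α b p)) u
            = ε * (Real.exp (phiB α b p) * (2*α*r)) := by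
          have hph := phiB'_apply α b p u
          simp only [ContinuousLinearMap.add_apply, ContinuousLinearMap.smul_apply,
            smul_eq_mul, hQ'p, ContinuousLinearMap.zero_apply, hph, hip]
          ring
        rw [hval] at hder
        have hexp : 0 < Real.exp (phiB α b p) := Real.exp_pos _
        have hpos : 0 < ε * (Real.exp (phiB α b p) * (2*α*r)) :=
          mul_pos hεpos (mul_pos hexp (mul_pos (mul_pos two_pos hαpos) hrpos))
        linarith
    intro x
    rcases lt_or_eq_of_le (hle x) with h | h
    · exact h
    · exact (hcore x b0 h hb0').elim
end
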